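/- For any fixed x ≥ 0 and any β with 1 ≤ β ≤ 2, the function y ↦ d_β(x|y) is convex on (0, ∞). -/
import Mathlib

noncomputable def dBeta (β x y : ℝ) : ℝ :=
  if β = 1 then x * Real.log (x / y) - x + y
  else (1 / (β * (β - 1))) * (x ^ β + (β - 1) * y ^ β - β * x * y ^ (β - 1))

theorem dBeta_convexOn_snd (x β : ℝ) (hx : 0 ≤ x) (hβ : 1 ≤ β) (hβ2 : β ≤ 2) :
    ConvexOn ℝ (Set.Ioi (0 : ℝ)) (fun y => dBeta β x y) := by
  rcases eq_or_lt_of_le hβ with h1 | h1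
  · -- β = 1
    have hg : ConvexOn ℝ (Set.Ioi (0 : ℝ))
        (fun y => (x * Real.log x - x) + (x • (-Real.log y) + y)) := by
      refine (convexOn_const _ (convex_Ioi 0)).add ?_
      exact ((strictConcaveOn_log_Ioi.concaveOn.neg).smul hx).add
        (convexOn_id (convex_Ioi 0))
    subst h1
    refine hg.congr fun y hy => ?_
    have hy0 : (0 : ℝ) < y := hy
    simp only [dBeta, if_pos rfl, smul_eq_mul]
    rcases eq_or_lt_of_le hx with hx0 | hx0
    · simp [← hx0]
    · rw [Real.log_div (ne_of_gt hx0) (ne_of_gt hy0)]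
      simp only [if_true]
      ring
  · -- β > 1
    have hne : β ≠ 1 := ne_of_gt h1
    have hb0 : (0 : ℝ) < β := by linarith
    have hb1 : (0 : ℝ) < β - 1 := by linarith
    have hg : ConvexOn ℝ (Set.Ioi (0 : ℝ))
        (fun y => (x ^ β / (β * (β - 1))) +
          (((1 : ℝ) / β) • (y ^ β) + (x / (β - 1)) • (-(y ^ (β - 1))))) := by
      refine (convexOn_const _ (convex_Ioi 0)).add (ConvexOn.add ?_ ?_)
      · exact (((convexOn_rpow hβ).subset (fun y hy => le_of_lt hy)
          (convex_Ioi 0)).smul (by positivity))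
      · refine ConvexOn.smul (by positivity) ?_
        exact (((Real.concaveOn_rpow (by linarith) (by linarith)).subset
          (fun y hy => le_of_lt hy) (convex_Ioi 0)).neg)
    refine hg.congr fun y hy => ?_
    simp only [dBeta, if_neg hne, smul_eq_mul]
    field_simp
    ring
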